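/- Let (W,S) be a Coxeter system and let w, y ∈ W. Assume that every reflection t ∈ W with ℓ(t y) < ℓ(y) satisfies ℓ(w t) < ℓ(w). Then ℓ(w y) = ℓ(w) − ℓ(y). (When W is the Weyl group of a root system, the hypothesis is equivalent to: w(α) is a negative root for every positive root α such that y⁻¹(α) is a negative root.) -/

import Mathlib

/-!
Read the hypothesis as: every left inversion of `y` is a right inversion of `w`. Write `y = s y'`
with `s` a left descent of `y`. Then `s` is a right descent of `w`, and for reflections `t ≠ s`,
conjugation by `s` matches the left inversions of `y'` with those of `y` and the right inversions
of `w s` with those of `w`. So the hypothesis passes to `(w s, y')`, and induction on `ℓ y` gives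
`ℓ w = ℓ (w s) + 1 = ℓ (w y) + ℓ y' + 1`.

The transfer `t ∈ N(w s) ↔ s t s ∈ N(w)` needs the strong exchange condition: a description of
the right inversions of `u` that does not depend on a reduced word for `u`. It comes from Tits'
action of `W` on `W × {±1}`, where `s` acts by `(w, ε) ↦ (s w s, ±ε)` and the sign flips exactly
when `w = s`. These involutions satisfy the braid relations: `(s_i s_j)^m` passes each reflection
`(s_j s_i)^k s_j` of the dihedral subgroup twice. The sign `η(u, t)` of the resulting action then
records the parity of the occurrences of `t` in the right inversion sequence of any word for `u`.
-/

section SignedConjugation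

variable {G : Type*} [Group G]

open Classical in
noncomputable def eqSign (w x : G) : ℤˣ := if w = x then -1 else 1

theorem eqSign_conj (g w x : G) : eqSign (g * w * g⁻¹) x = eqSign w (g⁻¹ * x * g) := by
  have : g * w * g⁻¹ = x ↔ w = g⁻¹ * x * g := by
    constructor <;> rintro rfl <;> group
  unfold eqSign
  split_ifs <;> tauto

noncomputable def signedConj (x : G) (p : G × ℤˣ) : G × ℤˣ :=
  (x * p.1 * x⁻¹, p.2 * eqSign p.1 x)

theorem signedConj_involutive {x : G} (hx : x * x = 1) : Function.Involutive (signedConj x) := by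
  rintro ⟨w, ε⟩
  refine Prod.ext ?_ ?_
  · simp only [signedConj, inv_eq_of_mul_eq_one_right hx, ← mul_assoc, hx, one_mul]
    rw [mul_assoc, hx, mul_one]
  · simp only [signedConj, eqSign_conj, inv_mul_cancel, one_mul]
    rw [mul_assoc, Int.units_mul_self, mul_one]

noncomputable def signedConjPerm {x : G} (hx : x * x = 1) : Equiv.Perm (G × ℤˣ) :=
  (signedConj_involutive hx).toPerm

theorem signedConjPerm_mul_apply {a b : G} (ha : a * a = 1) (hb : b * b = 1) (w : G)
    (ε : ℤˣ) :
    (signedConjPerm ha * signedConjPerm hb) (w, ε) =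
      (a * b * w * (a * b)⁻¹, ε * eqSign w b * eqSign w (b * a * b)) := by
  simp only [signedConjPerm, Equiv.Perm.mul_apply, Function.Involutive.coe_toPerm, signedConj,
    eqSign_conj]
  simp only [inv_eq_of_mul_eq_one_right hb, mul_inv_rev, mul_assoc]

theorem signedConjPerm_mul_pow_apply {a b : G} (ha : a * a = 1) (hb : b * b = 1) (n : ℕ)
    (w : G) (ε : ℤˣ) :
    ((signedConjPerm ha * signedConjPerm hb) ^ n) (w, ε) =
      ((a * b) ^ n * w * ((a * b) ^ n)⁻¹,
        ε * ∏ k ∈ Finset.range (2 * n), eqSign w ((b * a) ^ k * b)) := by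
  have shift : ∀ k, (a * b)⁻¹ * ((b * a) ^ k * b) * (a * b) = (b * a) ^ (k + 2) * b := by
    intro k
    rw [mul_inv_rev, inv_eq_of_mul_eq_one_right ha, inv_eq_of_mul_eq_one_right hb, pow_succ,
      pow_succ']
    simp only [mul_assoc]
  induction n generalizing w ε with
  | zero => simp
  | succ n ih =>
    rw [pow_succ, Equiv.Perm.mul_apply, signedConjPerm_mul_apply, ih]
    refine Prod.ext (by simp only [pow_succ]; group) ?_
    simp only [eqSign_conj, shift]
    rw [Nat.mul_succ, Finset.prod_range_succ', Finset.prod_range_succ', pow_one, pow_zero,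
      one_mul]
    simp only [mul_assoc, mul_comm, mul_left_comm]

end SignedConjugation

namespace CoxeterSystem

variable {B W : Type*} [Group W] {M : CoxeterMatrix B} (cs : CoxeterSystem M W)

local prefix:100 "s" => cs.simple
local prefix:100 "π" => cs.wordProd
local prefix:100 "ℓ" => cs.length
local prefix:100 "ris" => cs.rightInvSeq

theorem isLiftable_signedConjPerm :
    M.IsLiftable fun i => signedConjPerm (cs.simple_mul_simple_self i) := by
  intro i j
  ext ⟨w, ε⟩ : 1
  have periodic : ∀ k, (s j * s i) ^ (M i j + k) * s j = (s j * s i) ^ k * s j := by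
    simp [pow_add]
  rw [signedConjPerm_mul_pow_apply, two_mul, Finset.prod_range_add]
  simp only [periodic, Int.units_mul_self, simple_mul_simple_pow, inv_one, one_mul, mul_one,
    Equiv.Perm.one_apply]

noncomputable def signRep : W →* Equiv.Perm (W × ℤˣ) :=
  cs.lift ⟨_, cs.isLiftable_signedConjPerm⟩

theorem signRep_simple (i : B) :
    cs.signRep (s i) = signedConjPerm (cs.simple_mul_simple_self i) :=
  cs.lift_apply_simple _ i

theorem signRep_wordProd (ω : List B) (w : W) (ε : ℤˣ) :
    cs.signRep (π ω) (w, ε) =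
      (π ω * w * (π ω)⁻¹, ε * ((ris ω).map (eqSign w)).prod) := by
  induction ω generalizing ε with
  | nil => simp [rightInvSeq]
  | cons i ω ih =>
    rw [wordProd_cons, map_mul, Equiv.Perm.mul_apply, ih, signRep_simple]
    simp only [signedConjPerm, Function.Involutive.coe_toPerm, signedConj, eqSign_conj,
      rightInvSeq, List.map_cons, List.prod_cons, cs.inv_simple]
    exact Prod.ext (by simp only [mul_inv_rev, cs.inv_simple, mul_assoc])
      (by simp only [mul_assoc, mul_comm, mul_left_comm])

noncomputable def inversionSign (u t : W) : ℤˣ := (cs.signRep u (t, 1)).2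

theorem inversionSign_wordProd (ω : List B) (t : W) :
    cs.inversionSign (π ω) t = ((ris ω).map (eqSign t)).prod := by
  simp [inversionSign, signRep_wordProd]

theorem signRep_apply (u w : W) (ε : ℤˣ) :
    cs.signRep u (w, ε) = (u * w * u⁻¹, ε * cs.inversionSign u w) := by
  obtain ⟨ω, rfl⟩ := cs.wordProd_surjective u
  rw [signRep_wordProd, inversionSign_wordProd]

theorem inversionSign_mul (u v w : W) :
    cs.inversionSign (u * v) w = cs.inversionSign v w * cs.inversionSign u (v * w * v⁻¹) := by
  have := congrArg Prod.snd (Equiv.Perm.mul_apply (cs.signRep u) (cs.signRep v) (w, 1))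
  simpa [← map_mul, signRep_apply] using this

theorem inversionSign_one (w : W) : cs.inversionSign 1 w = 1 := by
  simp [inversionSign]

theorem inversionSign_simple (i : B) (w : W) : cs.inversionSign (s i) w = eqSign w (s i) := by
  simp [inversionSign, signRep_simple, signedConjPerm, signedConj]

theorem isRightInversion_of_inversionSign_eq_neg_one {u t : W}
    (hu : cs.inversionSign u t = -1) : cs.IsRightInversion u t := by
  obtain ⟨ω, hω, rfl⟩ := cs.exists_isReduced u
  refine cs.isRightInversion_of_mem_rightInvSeq hω ?_
  by_contra hmem
  rw [inversionSign_wordProd, List.prod_eq_one] at hu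
  · exact absurd hu (by decide)
  · simp only [List.mem_map]
    rintro _ ⟨t', ht', rfl⟩
    exact if_neg (ne_of_mem_of_not_mem ht' hmem).symm

theorem inversionSign_self {t : W} (ht : cs.IsReflection t) : cs.inversionSign t t = -1 := by
  obtain ⟨z, i, rfl⟩ := ht
  have conj : z⁻¹ * (z * s i * z⁻¹) * z⁻¹⁻¹ = s i := by group
  have cancel : cs.inversionSign z⁻¹ (z * s i * z⁻¹) * cs.inversionSign z (s i) = 1 := by
    rw [← inversionSign_one cs (z * s i * z⁻¹), ← mul_inv_cancel z, inversionSign_mul, conj]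
  have simple_self : s i * s i * (s i)⁻¹ = s i := by group
  rw [inversionSign_mul, conj, inversionSign_mul, simple_self, inversionSign_simple, eqSign,
    if_pos rfl, mul_left_comm, cancel, mul_one]

theorem isRightInversion_iff_inversionSign {u t : W} :
    cs.IsRightInversion u t ↔ cs.IsReflection t ∧ cs.inversionSign u t = -1 := by
  refine ⟨fun hu => ⟨hu.1, ?_⟩, fun hu => cs.isRightInversion_of_inversionSign_eq_neg_one hu.2⟩
  have ht := hu.1
  have sign_mul : cs.inversionSign (u * t) t = 1 :=
    (Int.units_eq_one_or _).resolve_right fun h =>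
      ht.not_isRightInversion_mul_left_iff.2 hu (cs.isRightInversion_of_inversionSign_eq_neg_one h)
  calc cs.inversionSign u t = cs.inversionSign (u * t * t) t := by
        rw [mul_assoc, ht.mul_self, mul_one]
    _ = -1 := by
        rw [inversionSign_mul, cs.inversionSign_self ht, ht.mul_self, one_mul, ht.inv, sign_mul,
          mul_one]

theorem isRightInversion_mul_simple_iff {w t : W} {i : B} (hti : t ≠ s i) :
    cs.IsRightInversion (w * s i) t ↔ cs.IsRightInversion w (s i * t * s i) := by
  rw [isRightInversion_iff_inversionSign, isRightInversion_iff_inversionSign, inversionSign_mul,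
    inversionSign_simple, eqSign, if_neg hti, one_mul, cs.inv_simple,
    ← isReflection_conj_iff cs (s i) t, cs.inv_simple]

theorem isLeftInversion_simple_mul_iff {w t : W} {i : B} (hti : t ≠ s i) :
    cs.IsLeftInversion (s i * w) t ↔ cs.IsLeftInversion w (s i * t * s i) := by
  rw [← isRightInversion_inv_iff, ← isRightInversion_inv_iff, mul_inv_rev, cs.inv_simple,
    isRightInversion_mul_simple_iff cs hti]

theorem length_eq_length_mul_add_length_of_forall_isLeftInversion {w y : W}
    (h : ∀ t, cs.IsLeftInversion y t → cs.IsRightInversion w t) : ℓ w = ℓ (w * y) + ℓ y := by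
  induction hn : ℓ y generalizing w y with
  | zero => simp [(cs.length_eq_zero_iff).1 hn]
  | succ n ih =>
    obtain ⟨i, hi⟩ := cs.exists_leftDescent_of_ne_one (w := y) (by rintro rfl; simp at hn)
    have hw : cs.IsRightDescent w i := by
      simpa using h (s i) ((cs.isLeftInversion_simple_iff_isLeftDescent y i).2 hi)
    have h' : ∀ t, cs.IsLeftInversion (s i * y) t → cs.IsRightInversion (w * s i) t := by
      intro t ht
      have hti : t ≠ s i := by
        rintro rfl
        exact ht.1.isLeftInversion_mul_right_iff.1 ht (by simpa using hi)
      exact (cs.isRightInversion_mul_simple_iff hti).2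
        (h _ ((cs.isLeftInversion_simple_mul_iff hti).1 ht))
    have hy := cs.isLeftDescent_iff.1 hi
    have hws := cs.isRightDescent_iff.1 hw
    have step := ih h' (by omega)
    rw [mul_assoc, simple_mul_simple_cancel_left] at step
    omega

end CoxeterSystem

theorem length_mul_eq_length_sub_length {B : Type*} {W : Type*} [Group W]
    {M : CoxeterMatrix B} (cs : CoxeterSystem M W) (w y : W)
    (h : ∀ t : W, cs.IsReflection t →
      cs.length (t * y) < cs.length y → cs.length (w * t) < cs.length w) :
    cs.length w = cs.length (w * y) + cs.length y :=
  cs.length_eq_length_mul_add_length_of_forall_isLeftInversion fun t ht => ⟨ht.1, h t ht.1 ht.2⟩
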